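/- For subnormalized ρ_{AB} and σ_B and 0 ≤ λ, if P⁺ and P⁻ are the projectors onto the nonnegative and strictly negative eigenspaces of ρ_{AB} - 2^{-λ} (id_A ⊗ σ_B), then ‖√ρ_{AB} √(id_A⊗σ_B)‖₁ · 2^{-λ/2} ≥ tr[P⁻ ρ_{AB}]. -/

import Mathlib

open Matrix Kronecker ComplexOrder

noncomputable section


open scoped Classical
namespace QIT

/-- Square root of a positive semidefinite matrix (junk value `0` otherwise). -/
noncomputable def msqrt {n : Type*} [Fintype n] [DecidableEq n] (A : Matrix n n ℂ) :
    Matrix n n ℂ :=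
  if h : A.PosSemidef then
    (h.1.eigenvectorUnitary : Matrix n n ℂ) * diagonal ((↑) ∘ Real.sqrt ∘ h.1.eigenvalues) *
      (star h.1.eigenvectorUnitary : Matrix n n ℂ)
  else 0

/-- Trace norm `‖A‖₁ = tr √(Aᴴ A)`. -/
noncomputable def traceNorm {n : Type*} [Fintype n] [DecidableEq n] (A : Matrix n n ℂ) : ℝ :=
  ((msqrt (Aᴴ * A)).trace).re

/-- Fidelity `F(ρ,σ) = ‖√ρ √σ‖₁`. -/
noncomputable def fidelity {n : Type*} [Fintype n] [DecidableEq n] (ρ σ : Matrix n n ℂ) : ℝ :=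
  traceNorm (msqrt ρ * msqrt σ)

/-- Generalized fidelity. -/
noncomputable def gFid {n : Type*} [Fintype n] [DecidableEq n] (ρ σ : Matrix n n ℂ) : ℝ :=
  fidelity ρ σ + Real.sqrt ((1 - ρ.trace.re) * (1 - σ.trace.re))

/-- Purified distance. -/
noncomputable def pDist {n : Type*} [Fintype n] [DecidableEq n] (ρ σ : Matrix n n ℂ) : ℝ :=
  Real.sqrt (1 - (gFid ρ σ) ^ 2)

/-- Subnormalized density operator. -/
def SubNormalized {n : Type*} [Fintype n] (ρ : Matrix n n ℂ) : Prop :=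
  ρ.PosSemidef ∧ ρ.trace.re ≤ 1

/-- Loewner order `A ≤ B`. -/
def mLE {n : Type*} [Fintype n] (A B : Matrix n n ℂ) : Prop := (B - A).PosSemidef

/-- Functional calculus for Hermitian matrices (junk value `0` otherwise). -/
noncomputable def cfcHerm {n : Type*} [Fintype n] [DecidableEq n] (A : Matrix n n ℂ)
    (f : ℝ → ℝ) : Matrix n n ℂ :=
  if hA : A.IsHermitian then
    (hA.eigenvectorUnitary : Matrix n n ℂ) *
      Matrix.diagonal (fun i => (f (hA.eigenvalues i) : ℂ)) *
      (star ((hA.eigenvectorUnitary : Matrix n n ℂ)))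
  else 0

/-- Projector onto the strictly negative eigenspaces of a Hermitian matrix. -/
noncomputable def negProj {n : Type*} [Fintype n] [DecidableEq n] (A : Matrix n n ℂ) :
    Matrix n n ℂ :=
  cfcHerm A (fun x => if x < 0 then 1 else 0)

/-- Projector onto the nonnegative eigenspaces of a Hermitian matrix. -/
noncomputable def posProj {n : Type*} [Fintype n] [DecidableEq n] (A : Matrix n n ℂ) :
    Matrix n n ℂ :=
  cfcHerm A (fun x => if 0 ≤ x then 1 else 0)

/-- Partial trace over the second (right) factor. -/
noncomputable def ptraceRight {a b : Type*} [Fintype a] [Fintype b]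
    (M : Matrix (a × b) (a × b) ℂ) : Matrix a a ℂ :=
  Matrix.of fun i j => ∑ k, M (i, k) (j, k)

/-- Partial trace over the first (left) factor. -/
noncomputable def ptraceLeft {a b : Type*} [Fintype a] [Fintype b]
    (M : Matrix (a × b) (a × b) ℂ) : Matrix b b ℂ :=
  Matrix.of fun i j => ∑ k, M (k, i) (k, j)

/-- Conditional min-entropy `H_min(A|B)_ρ`, conditioning on the second factor. -/
noncomputable def Hmin {a b : Type*} [Fintype a] [Fintype b] [DecidableEq a] [DecidableEq b]
    (ρ : Matrix (a × b) (a × b) ℂ) : ℝ :=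
  sSup {l : ℝ | ∃ σ : Matrix b b ℂ, SubNormalized σ ∧
    mLE ρ ((((2 : ℝ) ^ (-l) : ℝ)) • ((1 : Matrix a a ℂ) ⊗ₖ σ))}

/-- Relative conditional max-entropy `H_max(A|B)_{ρ|σ}`. -/
noncomputable def HmaxRel {a b : Type*} [Fintype a] [Fintype b] [DecidableEq a] [DecidableEq b]
    (ρ : Matrix (a × b) (a × b) ℂ) (σ : Matrix b b ℂ) : ℝ :=
  Real.logb 2 ((fidelity ρ ((1 : Matrix a a ℂ) ⊗ₖ σ)) ^ 2)

/-- Conditional max-entropy `H_max(A|B)_ρ`. -/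
noncomputable def Hmax {a b : Type*} [Fintype a] [Fintype b] [DecidableEq a] [DecidableEq b]
    (ρ : Matrix (a × b) (a × b) ℂ) : ℝ :=
  sSup {x : ℝ | ∃ σ : Matrix b b ℂ, SubNormalized σ ∧ x = HmaxRel ρ σ}

/-- Smooth conditional min-entropy. -/
noncomputable def sHmin {a b : Type*} [Fintype a] [Fintype b] [DecidableEq a] [DecidableEq b]
    (ε : ℝ) (ρ : Matrix (a × b) (a × b) ℂ) : ℝ :=
  sSup {x : ℝ | ∃ ρ' : Matrix (a × b) (a × b) ℂ,
    SubNormalized ρ' ∧ pDist ρ' ρ ≤ ε ∧ x = Hmin ρ'}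

/-- Smooth conditional max-entropy. -/
noncomputable def sHmax {a b : Type*} [Fintype a] [Fintype b] [DecidableEq a] [DecidableEq b]
    (ε : ℝ) (ρ : Matrix (a × b) (a × b) ℂ) : ℝ :=
  sInf {x : ℝ | ∃ ρ' : Matrix (a × b) (a × b) ℂ,
    SubNormalized ρ' ∧ pDist ρ' ρ ≤ ε ∧ x = Hmax ρ'}

/-- Operator norm of a Hermitian (in particular PSD) matrix: largest eigenvalue. -/
noncomputable def opNormPSD {n : Type*} [Fintype n] [DecidableEq n] (A : Matrix n n ℂ) : ℝ :=
  if hA : A.IsHermitian then ⨆ i, hA.eigenvalues i else 0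

end QIT

/-! With `Q = ρ`, `R = 2^{-λ} (1 ⊗ σ)` and `δᵢ` the eigenvalues of `Q - R`, splitting along the
eigenspaces of `Q - R` gives `2 tr[P⁺R + P⁻Q] = tr Q + tr R - Σ |δᵢ|`, while the Powers–Størmer
inequality `tr (√Q - √R)² ≤ Σ |δᵢ|` bounds the right-hand side by `2 Re tr[√Q √R]`.
Dropping `tr[P⁺R] ≥ 0`, pulling `2^{-λ/2}` out of `√R` and bounding `Re tr X ≤ ‖X‖₁` gives the
claim.
-/

open scoped MatrixOrder InnerProductSpace
open Complex (re_sum)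

namespace Matrix

lemma abs_re_dotProduct_mulVec_le {n : Type*} [Fintype n] {S T : Matrix n n ℂ}
    (h₁ : -T ≤ S) (h₂ : S ≤ T) (v : n → ℂ) :
    |(star v ⬝ᵥ S *ᵥ v).re| ≤ (star v ⬝ᵥ T *ᵥ v).re := by
  have hsum := (le_iff.mp h₁).re_dotProduct_nonneg v
  have hdiff := (le_iff.mp h₂).re_dotProduct_nonneg v
  simp only [sub_neg_eq_add, add_mulVec, sub_mulVec, dotProduct_add, dotProduct_sub,
    RCLike.re_to_complex, Complex.add_re, Complex.sub_re] at hsum hdiff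
  exact abs_le.mpr ⟨by linarith, by linarith⟩

variable {n : Type*} [Fintype n] [DecidableEq n]

lemma trace_eq_sum_dotProduct_mulVec {ι : Type*} [Fintype ι]
    (b : OrthonormalBasis ι ℂ (EuclideanSpace ℂ n)) (M : Matrix n n ℂ) :
    M.trace = ∑ i, star ⇑(b i) ⬝ᵥ M *ᵥ ⇑(b i) := by
  have h := LinearMap.trace_eq_sum_inner (toEuclideanLin M) b
  rw [LinearMap.trace_eq_matrix_trace ℂ (EuclideanSpace.basisFun n ℂ).toBasis,
    EuclideanSpace.basisFun_toBasis, toEuclideanLin, toLpLin_eq_toLin,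
    LinearMap.toMatrix_toLin] at h
  rw [h]
  refine Finset.sum_congr rfl fun i _ => ?_
  rw [EuclideanSpace.inner_eq_star_dotProduct, dotProduct_comm]
  rfl

namespace IsHermitian

variable {A : Matrix n n ℂ} (hA : A.IsHermitian)
include hA

lemma cfc_mulVec_eigenvectorBasis (f : ℝ → ℝ) (i : n) :
    cfc f A *ᵥ ⇑(hA.eigenvectorBasis i) =
      (f (hA.eigenvalues i) : ℂ) • ⇑(hA.eigenvectorBasis i) := by
  rw [hA.cfc_eq, IsHermitian.cfc, Unitary.conjStarAlgAut_apply, ← mulVec_mulVec, ← mulVec_mulVec,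
    star_eigenvectorUnitary_mulVec, diagonal_mulVec_single, ← eigenvectorUnitary_mulVec,
    ← mulVec_smul, ← Pi.single_smul, smul_eq_mul, mul_one, mul_one]
  rfl

lemma star_dotProduct_eigenvectorBasis (i : n) :
    star ⇑(hA.eigenvectorBasis i) ⬝ᵥ ⇑(hA.eigenvectorBasis i) = 1 := by
  rw [dotProduct_comm, ← EuclideanSpace.inner_eq_star_dotProduct, inner_self_eq_norm_sq_to_K,
    hA.eigenvectorBasis.orthonormal.1 i]
  simp

lemma dotProduct_mulVec_eigenvectorBasis (i : n) :
    star ⇑(hA.eigenvectorBasis i) ⬝ᵥ A *ᵥ ⇑(hA.eigenvectorBasis i) = hA.eigenvalues i := by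
  rw [hA.mulVec_eigenvectorBasis, dotProduct_smul, hA.star_dotProduct_eigenvectorBasis,
    Complex.real_smul, mul_one]

lemma trace_cfc_mul (f : ℝ → ℝ) (M : Matrix n n ℂ) :
    (cfc f A * M).trace = ∑ i, (f (hA.eigenvalues i) : ℂ) *
      (star ⇑(hA.eigenvectorBasis i) ⬝ᵥ M *ᵥ ⇑(hA.eigenvectorBasis i)) := by
  rw [trace_mul_comm, trace_eq_sum_dotProduct_mulVec hA.eigenvectorBasis]
  refine Finset.sum_congr rfl fun i _ => ?_
  rw [← mulVec_mulVec, hA.cfc_mulVec_eigenvectorBasis, mulVec_smul, dotProduct_smul, smul_eq_mul]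

lemma re_trace_mul_self_le_re_trace_cfc_abs_mul {T : Matrix n n ℂ} (h₁ : -T ≤ A) (h₂ : A ≤ T) :
    (A * A).trace.re ≤ (cfc (fun x : ℝ => |x|) A * T).trace.re := by
  nth_rw 1 [← cfc_id' ℝ A (ha := hA.isSelfAdjoint)]
  rw [hA.trace_cfc_mul, hA.trace_cfc_mul, re_sum, re_sum]
  refine Finset.sum_le_sum fun i _ => ?_
  have hle := abs_re_dotProduct_mulVec_le h₁ h₂ ⇑(hA.eigenvectorBasis i)
  rw [hA.dotProduct_mulVec_eigenvectorBasis, Complex.ofReal_re] at hle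
  rw [hA.dotProduct_mulVec_eigenvectorBasis, Complex.re_ofReal_mul, Complex.re_ofReal_mul,
    Complex.ofReal_re, ← abs_mul_abs_self]
  exact mul_le_mul_of_nonneg_left hle (abs_nonneg _)

lemma re_trace_mul_le_sum_abs_eigenvalues {W : Matrix n n ℂ} (h₁ : -1 ≤ W) (h₂ : W ≤ 1) :
    (W * A).trace.re ≤ ∑ i, |hA.eigenvalues i| := by
  rw [trace_mul_comm]
  nth_rw 1 [← cfc_id' ℝ A (ha := hA.isSelfAdjoint)]
  rw [hA.trace_cfc_mul, re_sum]
  refine Finset.sum_le_sum fun i _ => ?_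
  have hle := abs_re_dotProduct_mulVec_le h₁ h₂ ⇑(hA.eigenvectorBasis i)
  rw [one_mulVec, hA.star_dotProduct_eigenvectorBasis, Complex.one_re] at hle
  rw [Complex.re_ofReal_mul]
  calc _ ≤ |hA.eigenvalues i| * |(star ⇑(hA.eigenvectorBasis i) ⬝ᵥ W *ᵥ
        ⇑(hA.eigenvectorBasis i)).re| := by rw [← abs_mul]; exact le_abs_self _
    _ ≤ |hA.eigenvalues i| := mul_le_of_le_one_right (abs_nonneg _) hle

end IsHermitian

lemma trace_cfc_abs_mul_eq_trace_cfc_sign_mul {Q R : Matrix n n ℂ} (hQ : Q.PosSemidef)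
    (hR : R.PosSemidef) :
    (cfc (fun x : ℝ => |x|) (CFC.sqrt Q - CFC.sqrt R) * (CFC.sqrt Q + CFC.sqrt R)).trace =
      (cfc (fun x : ℝ => (SignType.sign x : ℝ)) (CFC.sqrt Q - CFC.sqrt R) * (Q - R)).trace := by
  set S := CFC.sqrt Q - CFC.sqrt R
  set T := CFC.sqrt Q + CFC.sqrt R
  set W := cfc (fun x : ℝ => (SignType.sign x : ℝ)) S
  have habs : cfc (fun x : ℝ => |x|) S = W * S := by
    simp_rw [← sign_mul_self]
    rw [cfc_mul _ _ S (S.finite_real_spectrum.continuousOn _), cfc_id' ℝ S]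
  have hcomm : W * S = S * W := by
    simpa only [cfc_id' ℝ S] using
      (cfc_commute_cfc (fun x : ℝ => (SignType.sign x : ℝ)) (fun x => x) S).eq
  have hST : S * T + T * S = (Q - R) + (Q - R) := by
    simp only [S, T, sub_mul, mul_add, add_mul, mul_sub, CFC.sqrt_mul_sqrt_self Q hQ.nonneg,
      CFC.sqrt_mul_sqrt_self R hR.nonneg]
    abel
  have h2 : (W * (S * T + T * S)).trace = (cfc (fun x : ℝ => |x|) S * T).trace +
      (cfc (fun x : ℝ => |x|) S * T).trace := by
    rw [mul_add, trace_add, ← mul_assoc, ← habs, trace_mul_cycle', ← mul_assoc, ← hcomm, ← habs]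
  rw [hST, mul_add, trace_add] at h2
  linear_combination -h2 / 2

/-- Powers–Størmer: with `S = √Q - √R` and `T = √Q + √R` one has `-T ≤ S ≤ T`, so
`tr S² ≤ tr |S| T = tr[sgn(S) (Q - R)]`, and `-1 ≤ sgn S ≤ 1`. -/
theorem re_trace_sqrt_sub_sqrt_mul_self_le {Q R : Matrix n n ℂ} (hQ : Q.PosSemidef)
    (hR : R.PosSemidef) (hD : (Q - R).IsHermitian) :
    ((CFC.sqrt Q - CFC.sqrt R) * (CFC.sqrt Q - CFC.sqrt R)).trace.re ≤
      ∑ i, |hD.eigenvalues i| := by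
  set S := CFC.sqrt Q - CFC.sqrt R
  set W := cfc (fun x : ℝ => (SignType.sign x : ℝ)) S
  have hS : S.IsHermitian :=
    (CFC.sqrt_nonneg Q).posSemidef.isHermitian.sub (CFC.sqrt_nonneg R).posSemidef.isHermitian
  have hST₁ : -(CFC.sqrt Q + CFC.sqrt R) ≤ S := by
    rw [le_iff]
    convert (CFC.sqrt_nonneg Q).posSemidef.add (CFC.sqrt_nonneg Q).posSemidef using 1
    simp only [S]; abel
  have hST₂ : S ≤ CFC.sqrt Q + CFC.sqrt R := by
    rw [le_iff]
    convert (CFC.sqrt_nonneg R).posSemidef.add (CFC.sqrt_nonneg R).posSemidef using 1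
    simp only [S]; abel
  have hsign (x : ℝ) : -1 ≤ (SignType.sign x : ℝ) ∧ (SignType.sign x : ℝ) ≤ 1 := by
    generalize SignType.sign x = s
    cases s <;> norm_num
  have hW₁ : -1 ≤ W := by
    simpa using algebraMap_le_cfc _ (-1 : ℝ) S (fun x _ => (hsign x).1)
      (S.finite_real_spectrum.continuousOn _)
  have hW₂ : W ≤ 1 := cfc_le_one _ S fun x _ => (hsign x).2
  calc _ ≤ (cfc (fun x : ℝ => |x|) S * (CFC.sqrt Q + CFC.sqrt R)).trace.re :=
        hS.re_trace_mul_self_le_re_trace_cfc_abs_mul hST₁ hST₂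
    _ = (W * (Q - R)).trace.re := by rw [trace_cfc_abs_mul_eq_trace_cfc_sign_mul hQ hR]
    _ ≤ ∑ i, |hD.eigenvalues i| := hD.re_trace_mul_le_sum_abs_eigenvalues hW₁ hW₂

/-- In an eigenbasis `bᵢ` of `P` one has `‖X bᵢ‖ = pᵢ`, so Cauchy–Schwarz bounds
`Re ⟪bᵢ, X bᵢ⟫` by `pᵢ`. -/
lemma re_trace_le_re_trace_of_mul_self_eq {X P : Matrix n n ℂ} (hP : P.PosSemidef)
    (h : P * P = Xᴴ * X) : X.trace.re ≤ P.trace.re := by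
  rw [trace_eq_sum_dotProduct_mulVec hP.1.eigenvectorBasis X, hP.1.trace_eq_sum_eigenvalues,
    re_sum, re_sum]
  refine Finset.sum_le_sum fun i _ => ?_
  set b := hP.1.eigenvectorBasis i
  set u : EuclideanSpace ℂ n := toEuclideanLin X b
  have hinner : star ⇑b ⬝ᵥ X *ᵥ ⇑b = ⟪b, u⟫_ℂ := by
    rw [EuclideanSpace.inner_eq_star_dotProduct, dotProduct_comm]; rfl
  have hnorm_sq : ‖u‖ ^ 2 = hP.1.eigenvalues i ^ 2 := by
    rw [@norm_sq_eq_re_inner ℂ, EuclideanSpace.inner_eq_star_dotProduct, dotProduct_comm]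
    change (star (X *ᵥ ⇑b) ⬝ᵥ X *ᵥ ⇑b).re = _
    rw [star_mulVec, ← dotProduct_mulVec, mulVec_mulVec, ← h, ← mulVec_mulVec,
      hP.1.mulVec_eigenvectorBasis, mulVec_smul, hP.1.mulVec_eigenvectorBasis, smul_smul,
      dotProduct_smul, hP.1.star_dotProduct_eigenvectorBasis]
    simp [sq]
  have hnorm : ‖u‖ = hP.1.eigenvalues i :=
    (pow_left_inj₀ (norm_nonneg u) (hP.eigenvalues_nonneg i) two_ne_zero).mp hnorm_sq
  calc (star ⇑b ⬝ᵥ X *ᵥ ⇑b).re ≤ ‖⟪b, u⟫_ℂ‖ := hinner ▸ Complex.re_le_norm _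
    _ ≤ ‖b‖ * ‖u‖ := norm_inner_le_norm b u
    _ = _ := by rw [hP.1.eigenvectorBasis.orthonormal.1 i, hnorm, one_mul]; rfl

lemma PosSemidef.sqrt_real_smul {A : Matrix n n ℂ} (hA : A.PosSemidef) {c : ℝ} (hc : 0 ≤ c) :
    CFC.sqrt (c • A) = Real.sqrt c • CFC.sqrt A := by
  rw [CFC.sqrt_eq_iff _ _ (hA.smul hc).nonneg ((CFC.sqrt_nonneg A).posSemidef.smul
    (Real.sqrt_nonneg c)).nonneg, smul_mul_smul_comm, CFC.sqrt_mul_sqrt_self A hA.nonneg,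
    Real.mul_self_sqrt hc]

end Matrix

namespace QIT

variable {n : Type*} [Fintype n] [DecidableEq n]

lemma cfcHerm_eq_cfc {A : Matrix n n ℂ} (hA : A.IsHermitian) (f : ℝ → ℝ) :
    cfcHerm A f = cfc f A := by
  rw [cfcHerm, dif_pos hA, hA.cfc_eq, IsHermitian.cfc, Unitary.conjStarAlgAut_apply]
  rfl

lemma msqrt_eq_sqrt {A : Matrix n n ℂ} (hA : A.PosSemidef) : msqrt A = CFC.sqrt A := by
  rw [msqrt, dif_pos hA, CFC.sqrt_eq_real_sqrt A hA.nonneg, cfcₙ_eq_cfc, hA.1.cfc_eq,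
    IsHermitian.cfc, Unitary.conjStarAlgAut_apply]
  rfl

lemma re_trace_le_traceNorm (X : Matrix n n ℂ) : X.trace.re ≤ traceNorm X := by
  have hX : (Xᴴ * X).PosSemidef := posSemidef_conjTranspose_mul_self X
  rw [traceNorm, msqrt_eq_sqrt hX]
  exact re_trace_le_re_trace_of_mul_self_eq (CFC.sqrt_nonneg _).posSemidef
    (CFC.sqrt_mul_sqrt_self _ hX.nonneg)

lemma posProj_add_negProj {D : Matrix n n ℂ} (hD : D.IsHermitian) :
    posProj D + negProj D = 1 := by
  rw [posProj, negProj, cfcHerm_eq_cfc hD, cfcHerm_eq_cfc hD,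
    ← cfc_add (a := D) _ _ (D.finite_real_spectrum.continuousOn _)
      (D.finite_real_spectrum.continuousOn _)]
  convert cfc_const_one ℝ D using 2
  ext x
  split_ifs <;> linarith

lemma re_trace_posProj_mul_nonneg {D M : Matrix n n ℂ} (hD : D.IsHermitian)
    (hM : M.PosSemidef) : 0 ≤ (posProj D * M).trace.re := by
  rw [posProj, cfcHerm_eq_cfc hD, hD.trace_cfc_mul, re_sum]
  refine Finset.sum_nonneg fun i _ => ?_
  rw [Complex.re_ofReal_mul]
  exact mul_nonneg (by split_ifs <;> norm_num) (hM.re_dotProduct_nonneg _)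

lemma two_mul_re_trace_posProj_mul_add_negProj_mul {Q R : Matrix n n ℂ}
    (hD : (Q - R).IsHermitian) :
    2 * (posProj (Q - R) * R + negProj (Q - R) * Q).trace.re =
      Q.trace.re + R.trace.re - ∑ i, |hD.eigenvalues i| := by
  have hsplit : posProj (Q - R) * R + negProj (Q - R) * Q = R + negProj (Q - R) * (Q - R) := by
    calc _ = (posProj (Q - R) + negProj (Q - R)) * R + negProj (Q - R) * (Q - R) := by
          rw [add_mul, mul_sub]; abel
      _ = _ := by rw [posProj_add_negProj hD, one_mul]
  have hneg : (negProj (Q - R) * (Q - R)).trace.re =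
      ∑ i, (if hD.eigenvalues i < 0 then 1 else 0) * hD.eigenvalues i := by
    rw [negProj, cfcHerm_eq_cfc hD, hD.trace_cfc_mul, re_sum]
    simp only [hD.dotProduct_mulVec_eigenvectorBasis, ← Complex.ofReal_mul, Complex.ofReal_re]
  have hQ : Q.trace.re = R.trace.re + ∑ i, hD.eigenvalues i := by
    rw [show Q.trace = R.trace + (Q - R).trace by rw [trace_sub]; ring, Complex.add_re,
      hD.trace_eq_sum_eigenvalues, re_sum]
    rfl
  have hterm (x : ℝ) : 2 * ((if x < 0 then 1 else 0) * x) = x - |x| := by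
    split_ifs with hx
    · rw [abs_of_neg hx]; ring
    · rw [abs_of_nonneg (not_lt.mp hx)]; ring
  rw [hsplit, trace_add, Complex.add_re, hneg, hQ, mul_add, Finset.mul_sum]
  simp only [hterm, Finset.sum_sub_distrib]
  ring

theorem re_trace_posProj_mul_add_negProj_mul_le {Q R : Matrix n n ℂ} (hQ : Q.PosSemidef)
    (hR : R.PosSemidef) :
    (posProj (Q - R) * R + negProj (Q - R) * Q).trace.re ≤
      (CFC.sqrt Q * CFC.sqrt R).trace.re := by
  have hD : (Q - R).IsHermitian := hQ.1.sub hR.1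
  have hexpand : ((CFC.sqrt Q - CFC.sqrt R) * (CFC.sqrt Q - CFC.sqrt R)).trace.re =
      Q.trace.re + R.trace.re - 2 * (CFC.sqrt Q * CFC.sqrt R).trace.re := by
    rw [sub_mul, mul_sub, mul_sub, CFC.sqrt_mul_sqrt_self Q hQ.nonneg,
      CFC.sqrt_mul_sqrt_self R hR.nonneg, trace_sub, trace_sub, trace_sub,
      trace_mul_comm (CFC.sqrt R)]
    simp only [Complex.sub_re]
    ring
  linarith [re_trace_sqrt_sub_sqrt_mul_self_le hQ hR hD,
    two_mul_re_trace_posProj_mul_add_negProj_mul hD]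

end QIT

open QIT in
theorem stmt13_general {a b : Type*} [Fintype a] [Fintype b] [DecidableEq a] [DecidableEq b]
    (l : ℝ)
    (ρ : Matrix (a × b) (a × b) ℂ) (hρ : SubNormalized ρ)
    (σ : Matrix b b ℂ) (hσ : SubNormalized σ) :
    traceNorm (msqrt ρ * msqrt ((1 : Matrix a a ℂ) ⊗ₖ σ)) * (2 : ℝ) ^ (-(l / 2)) ≥
      ((negProj (ρ - (((2 : ℝ) ^ (-l) : ℝ)) • ((1 : Matrix a a ℂ) ⊗ₖ σ)) * ρ).trace).re := by
  set τ := (1 : Matrix a a ℂ) ⊗ₖ σ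
  set c := (2 : ℝ) ^ (-l)
  have hτ : τ.PosSemidef := PosSemidef.one.kronecker hσ.1
  have hR : (c • τ).PosSemidef := hτ.smul (by positivity)
  have hsqrt_c : Real.sqrt c = (2 : ℝ) ^ (-(l / 2)) := by
    rw [Real.sqrt_eq_rpow, ← Real.rpow_mul zero_le_two]
    ring_nf
  calc (negProj (ρ - c • τ) * ρ).trace.re
      ≤ (posProj (ρ - c • τ) * (c • τ) + negProj (ρ - c • τ) * ρ).trace.re := by
        rw [trace_add, Complex.add_re]
        linarith [re_trace_posProj_mul_nonneg (hρ.1.1.sub hR.1) hR]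
    _ ≤ (CFC.sqrt ρ * CFC.sqrt (c • τ)).trace.re := re_trace_posProj_mul_add_negProj_mul_le hρ.1 hR
    _ = (2 : ℝ) ^ (-(l / 2)) * (msqrt ρ * msqrt τ).trace.re := by
        rw [hτ.sqrt_real_smul (by positivity), hsqrt_c, mul_smul_comm, trace_smul,
          msqrt_eq_sqrt hρ.1, msqrt_eq_sqrt hτ, Complex.smul_re, smul_eq_mul]
    _ ≤ (2 : ℝ) ^ (-(l / 2)) * traceNorm (msqrt ρ * msqrt τ) :=
        mul_le_mul_of_nonneg_left (re_trace_le_traceNorm _) (by positivity)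
    _ = _ := mul_comm _ _

open QIT in
/-- `‖√ρ_AB √(1_A ⊗ σ_B)‖₁ · 2^{-λ/2} ≥ tr[P⁻ ρ_AB]` where `P⁻` projects onto the strictly
negative eigenspace of `ρ_AB - 2^{-λ}(1_A ⊗ σ_B)`. -/
theorem stmt13 {a b : Type*} [Fintype a] [Fintype b] [DecidableEq a] [DecidableEq b]
    (l : ℝ) (hl : 0 ≤ l)
    (ρ : Matrix (a × b) (a × b) ℂ) (hρ : SubNormalized ρ)
    (σ : Matrix b b ℂ) (hσ : SubNormalized σ) :
    traceNorm (msqrt ρ * msqrt ((1 : Matrix a a ℂ) ⊗ₖ σ)) * (2 : ℝ) ^ (-(l / 2)) ≥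
      ((negProj (ρ - (((2 : ℝ) ^ (-l) : ℝ)) • ((1 : Matrix a a ℂ) ⊗ₖ σ)) * ρ).trace).re :=
  stmt13_general l ρ hρ σ hσ
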